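/- Let M be a torsion-free left module over an integral domain R and N a submodule of M. Then Soc(Cl_M(N)) = Cl_M(Soc(N)) = Soc(N). -/

import Mathlib

/-- The closure of a submodule `N` of a module `M` over an integral domain:
all elements `m` with `r • m ∈ N` for some nonzero `r`. -/
def Submodule.domainClosure {R M : Type*} [CommRing R] [IsDomain R] [AddCommGroup M] [Module R M]
    (N : Submodule R M) : Submodule R M where
  carrier := {m : M | ∃ r : R, r ≠ 0 ∧ r • m ∈ N}
  zero_mem' := ⟨1, one_ne_zero, by simp⟩
  add_mem' := by
    rintro a b ⟨r, hr, hra⟩ ⟨s, hs, hsb⟩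
    refine ⟨r * s, mul_ne_zero hr hs, ?_⟩
    rw [smul_add]
    exact N.add_mem (by rw [mul_comm, mul_smul]; exact N.smul_mem s hra)
      (by rw [mul_smul]; exact N.smul_mem r hsb)
  smul_mem' := by
    rintro c a ⟨r, hr, hra⟩
    exact ⟨r, hr, by rw [smul_comm]; exact N.smul_mem c hra⟩

/-- The socle of a submodule `N` of `M`: the sum of all simple submodules of `M` contained
in `N`, regarded as a submodule of `M`. -/
def Submodule.socle {R M : Type*} [Ring R] [AddCommGroup M] [Module R M]
    (N : Submodule R M) : Submodule R M :=
  sSup {S : Submodule R M | S ≤ N ∧ IsSimpleModule R ↥S}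

/-! A torsion-free simple module over a domain `R` is isomorphic to `R` (for `x ≠ 0`, the map
`r ↦ r • x` is injective by torsion-freeness and surjective by simplicity), so `R` is a field.
Hence either `R` is a field, and the closure of every submodule is the submodule itself, or every
socle in `M` vanishes, and the claim reduces to `Cl_M(0) = 0`, which is torsion-freeness again. -/

theorem isField_of_isSimpleModule (R M : Type*) [CommRing R] [IsDomain R] [AddCommGroup M]
    [Module R M] [Module.IsTorsionFree R M] [IsSimpleModule R M] : IsField R := by
  have := IsSimpleModule.nontrivial R M
  obtain ⟨x, hx⟩ := exists_ne (0 : M)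
  have : IsSimpleModule R R := IsSimpleModule.congr <| LinearEquiv.ofBijective _
    ⟨smul_left_injective R hx, IsSimpleModule.toSpanSingleton_surjective R hx⟩
  obtain ⟨-, h⟩ := isSimpleModule_self_iff_isUnit.mp this
  exact ⟨exists_pair_ne R, mul_comm, fun ha => (h _ ha).exists_right_inv⟩

namespace Submodule

variable {R M : Type*} [CommRing R] [IsDomain R] [AddCommGroup M] [Module R M]

theorem le_domainClosure (K : Submodule R M) : K ≤ K.domainClosure :=
  fun _ hm => ⟨1, one_ne_zero, by rwa [one_smul]⟩

theorem domainClosure_eq_self_of_isField (hR : IsField R) (K : Submodule R M) :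
    K.domainClosure = K := by
  refine le_antisymm ?_ K.le_domainClosure
  rintro m ⟨r, hr, hrm⟩
  obtain ⟨s, hsr⟩ := hR.mul_inv_cancel hr
  have hm : m = s • r • m := by rw [← mul_smul, mul_comm, hsr, one_smul]
  exact hm ▸ K.smul_mem s hrm

theorem domainClosure_bot [Module.IsTorsionFree R M] : (⊥ : Submodule R M).domainClosure = ⊥ :=
  eq_bot_iff.mpr fun _ ⟨_, hr, hrm⟩ => (smul_eq_zero.mp ((mem_bot R).mp hrm)).resolve_left hr

theorem socle_eq_bot_of_not_isField [Module.IsTorsionFree R M] (hR : ¬IsField R)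
    (K : Submodule R M) : K.socle = ⊥ :=
  sSup_eq_bot.mpr fun S ⟨_, _⟩ => absurd (isField_of_isSimpleModule R S) hR

end Submodule

/-- For a torsion-free module `M` over an integral domain and a submodule `N`,
`Soc(Cl_M(N)) = Cl_M(Soc(N)) = Soc(N)`. -/
theorem socle_closure_eq_closure_socle {R M : Type*} [CommRing R] [IsDomain R]
    [AddCommGroup M] [Module R M] [NoZeroSMulDivisors R M] (N : Submodule R M) :
    (Submodule.domainClosure N).socle = Submodule.domainClosure N.socle ∧
      Submodule.domainClosure N.socle = N.socle := by
  by_cases hR : IsField R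
  · simp only [Submodule.domainClosure_eq_self_of_isField hR, and_self]
  · simp only [Submodule.socle_eq_bot_of_not_isField hR, Submodule.domainClosure_bot, and_self]
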